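/- Let X be a normal space in which every open cover has a subcover of cardinality < τ for an infinite cardinal τ. For every lower semi-continuous mapping θ from X into a discrete space Y there exists a single-valued selection g : X → Y (not necessarily continuous) of θ with |g(X)| < τ. -/

import Mathlib

open Set Cardinal

universe u

/-- `lindelofLe X τ` means the Lindelöf number of `X` is at most `τ`: every open
cover of `X` has a subcover of cardinality `≤ τ`. -/
def lindelofLe (X : Type u) [TopologicalSpace X] (τ : Cardinal.{u}) : Prop :=
  ∀ 𝒰 : Set (Set X), (∀ U ∈ 𝒰, IsOpen U) → ⋃₀ 𝒰 = Set.univ →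
    ∃ 𝒱 ⊆ 𝒰, #↥𝒱 ≤ τ ∧ ⋃₀ 𝒱 = Set.univ

/-- `compactDegLe X τ` means the degree of compactness of `X` is at most `τ`:
every open cover of `X` has a subcover of cardinality `< τ`. -/
def compactDegLe (X : Type u) [TopologicalSpace X] (τ : Cardinal.{u}) : Prop :=
  ∀ 𝒰 : Set (Set X), (∀ U ∈ 𝒰, IsOpen U) → ⋃₀ 𝒰 = Set.univ →
    ∃ 𝒱 ⊆ 𝒰, #↥𝒱 < τ ∧ ⋃₀ 𝒱 = Set.univ

/-- The Lindelöf number `l(X)`. -/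
noncomputable def lNum (X : Type u) [TopologicalSpace X] : Cardinal.{u} :=
  sInf {τ | lindelofLe X τ}

/-- The degree of compactness `k(X)`. -/
noncomputable def kNum (X : Type u) [TopologicalSpace X] : Cardinal.{u} :=
  sInf {τ | compactDegLe X τ}

theorem compactDegLe.exists_subcover {X ι : Type u} [TopologicalSpace X] {τ : Cardinal.{u}}
    (hk : compactDegLe X τ) (U : ι → Set X) (hU : ∀ i, IsOpen (U i))
    (hcov : ∀ x, ∃ i, x ∈ U i) : ∃ s : Set ι, #s < τ ∧ ∀ x, ∃ i ∈ s, x ∈ U i := by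
  obtain ⟨𝒱, h𝒱U, h𝒱τ, h𝒱cov⟩ := hk (range U) (forall_mem_range.2 hU)
    (eq_univ_of_forall fun x ↦ by simpa using hcov x)
  choose index hindex using fun V : 𝒱 ↦ h𝒱U V.2
  refine ⟨range index, mk_range_le.trans_lt h𝒱τ, fun x ↦ ?_⟩
  obtain ⟨V, hV, hxV⟩ := h𝒱cov.symm ▸ mem_univ x
  exact ⟨index ⟨V, hV⟩, mem_range_self _, (hindex ⟨V, hV⟩).symm ▸ hxV⟩

theorem stmt10_general (X : Type u) (Y : Type u) [TopologicalSpace X]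
    (τ : Cardinal.{u}) (hk : compactDegLe X τ)
    (θ : X → Set Y) (hne : ∀ x, (θ x).Nonempty)
    (hlsc : ∀ y : Y, IsOpen {x | y ∈ θ x}) :
    ∃ g : X → Y, (∀ x, g x ∈ θ x) ∧ #↥(Set.range g) < τ := by
  obtain ⟨s, hsτ, hs⟩ := hk.exists_subcover (fun y ↦ {x | y ∈ θ x}) hlsc hne
  choose g hgs hgθ using hs
  exact ⟨g, hgθ, (mk_le_mk_of_subset (range_subset_iff.2 hgs)).trans_lt hsτ⟩

/-- if `X` is normal and every open cover of `X` has a subcover of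
cardinality `< τ`, then every lower semi-continuous map into a discrete space
`Y` admits a single-valued selection `g` with `|g(X)| < τ`. -/
theorem stmt10 (X : Type u) (Y : Type u) [TopologicalSpace X] [NormalSpace X]
    [TopologicalSpace Y] [DiscreteTopology Y]
    (τ : Cardinal.{u}) (hτ : ℵ₀ ≤ τ) (hk : compactDegLe X τ)
    (θ : X → Set Y) (hne : ∀ x, (θ x).Nonempty)
    (hlsc : ∀ y : Y, IsOpen {x | y ∈ θ x}) :
    ∃ g : X → Y, (∀ x, g x ∈ θ x) ∧ #↥(Set.range g) < τ :=
  stmt10_general X Y τ hk θ hne hlsc
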